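/- Let λ ∈ [0,1] and define the phase-damping Kraus operators P₀ = !![1, 0; 0, √(1−λ)] and P₁ = !![0, 0; 0, √λ]. Then for the projectors Π± = (1/2)(𝟙 ± Q(Θ,Φ)), one has P₀†Π±P₀ + P₁†Π±P₁ = (1/2)(𝟙 ± v·σ) with v = (√(1−λ) sinΘ cosΦ, −√(1−λ) sinΘ sinΦ, cosΘ); in particular the induced POVM is unbiased (bias 0) with sharpness ‖v‖ = √(1 − λ sin²Θ). -/

import Mathlib

open Matrix

/-- Pauli matrix σ₁. -/
noncomputable def σ1 : Matrix (Fin 2) (Fin 2) ℂ := !![0, 1; 1, 0]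
/-- Pauli matrix σ₂. -/
noncomputable def σ2 : Matrix (Fin 2) (Fin 2) ℂ := !![0, -Complex.I; Complex.I, 0]
/-- Pauli matrix σ₃. -/
noncomputable def σ3 : Matrix (Fin 2) (Fin 2) ℂ := !![1, 0; 0, -1]

/-- The three Pauli matrices, indexed. -/
noncomputable def pauli : Fin 3 → Matrix (Fin 2) (Fin 2) ℂ
  | 0 => σ1
  | 1 => σ2
  | 2 => σ3

/-- `v · σ = v₁σ₁ + v₂σ₂ + v₃σ₃` for `v ∈ ℝ³`. -/
noncomputable def dotσ (v : Fin 3 → ℝ) : Matrix (Fin 2) (Fin 2) ℂ :=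
  ∑ i, (v i : ℂ) • pauli i

/-- Euclidean norm of `v ∈ ℝ³`. -/
noncomputable def enorm3 (v : Fin 3 → ℝ) : ℝ := Real.sqrt (v 0 ^ 2 + v 1 ^ 2 + v 2 ^ 2)

/-- The dichotomic observable `Q(Θ,Φ)`. -/
noncomputable def Qobs (Θ Φ : ℝ) : Matrix (Fin 2) (Fin 2) ℂ :=
  !![(Real.cos Θ : ℂ), Complex.exp (Φ * Complex.I) * (Real.sin Θ : ℂ);
     Complex.exp (-Φ * Complex.I) * (Real.sin Θ : ℂ), -(Real.cos Θ : ℂ)]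

/-- The spectral projectors `Π_s = (1/2)(𝟙 + s·Q(Θ,Φ))`, sign `s = ±1`. -/
noncomputable def projQ (Θ Φ s : ℝ) : Matrix (Fin 2) (Fin 2) ℂ :=
  (1/2 : ℂ) • (1 + (s : ℂ) • Qobs Θ Φ)

/-! The two Kraus operators are diagonal with `(√(1−λ))² + (√λ)² = 1`, so the dual channel keeps
the diagonal entries of a qubit effect and multiplies its off-diagonal entries by `√(1−λ)`.
In Pauli coordinates `Q(Θ,Φ)` has Bloch vector `(sinΘ cosΦ, −sinΘ sinΦ, cosΘ)`, so the channel
shrinks its `σ₁`, `σ₂` components by `√(1−λ)` and leaves the `σ₃` component and the bias alone. -/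

def scaleOffDiag (a : ℂ) (M : Matrix (Fin 2) (Fin 2) ℂ) : Matrix (Fin 2) (Fin 2) ℂ :=
  !![M 0 0, a * M 0 1; a * M 1 0, M 1 1]

lemma diagonal_kraus_sum_eq_scaleOffDiag (M : Matrix (Fin 2) (Fin 2) ℂ) {a b : ℝ}
    (hab : a ^ 2 + b ^ 2 = 1) :
    (!![1, 0; 0, (a : ℂ)])ᴴ * M * !![1, 0; 0, (a : ℂ)]
      + (!![0, 0; 0, (b : ℂ)])ᴴ * M * !![0, 0; 0, (b : ℂ)] = scaleOffDiag a M := by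
  have hab' : (a : ℂ) ^ 2 + (b : ℂ) ^ 2 = 1 := by exact_mod_cast hab
  ext i j
  fin_cases i <;> fin_cases j <;> simp [scaleOffDiag, Matrix.mul_apply, Fin.sum_univ_two, mul_comm]
  linear_combination M 1 1 * hab'

lemma dotσ_eq (v : Fin 3 → ℝ) :
    dotσ v = !![(v 2 : ℂ), v 0 - v 1 * Complex.I; v 0 + v 1 * Complex.I, -v 2] := by
  ext i j
  fin_cases i <;> fin_cases j <;> simp [dotσ, pauli, σ1, σ2, σ3, Fin.sum_univ_three]; ring

lemma Qobs_eq (Θ Φ : ℝ) :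
    Qobs Θ Φ = !![(Real.cos Θ : ℂ), (Real.cos Φ + Real.sin Φ * Complex.I) * Real.sin Θ;
      (Real.cos Φ - Real.sin Φ * Complex.I) * Real.sin Θ, -(Real.cos Θ : ℂ)] := by
  have hexp : Complex.exp (-Φ * Complex.I) = Complex.cos Φ - Complex.sin Φ * Complex.I := by
    rw [Complex.exp_mul_I, Complex.cos_neg, Complex.sin_neg]; ring
  rw [Qobs, hexp, Complex.exp_mul_I]
  simp only [Complex.ofReal_cos, Complex.ofReal_sin]

lemma scaleOffDiag_projQ (Θ Φ s a : ℝ) :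
    scaleOffDiag a (projQ Θ Φ s) = (1/2 : ℂ) • (1 + (s : ℂ) •
      dotσ ![a * Real.sin Θ * Real.cos Φ, -(a * Real.sin Θ * Real.sin Φ), Real.cos Θ]) := by
  rw [dotσ_eq]
  ext i j
  fin_cases i <;> fin_cases j <;> simp [scaleOffDiag, projQ, Qobs_eq] <;> ring

lemma enorm3_scaled_bloch (Θ Φ a : ℝ) :
    enorm3 ![a * Real.sin Θ * Real.cos Φ, -(a * Real.sin Θ * Real.sin Φ), Real.cos Θ]
      = Real.sqrt (1 - (1 - a ^ 2) * Real.sin Θ ^ 2) := by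
  unfold enorm3
  congr 1
  simp only [Matrix.cons_val_zero, Matrix.cons_val_one, Matrix.cons_val_two, Matrix.head_cons,
    Matrix.tail_cons]
  linear_combination a ^ 2 * Real.sin Θ ^ 2 * Real.sin_sq_add_cos_sq Φ + Real.sin_sq_add_cos_sq Θ

/-- The conjugate phase-damping channel maps `Π±` to the unbiased POVM `(1/2)(𝟙 ± v·σ)` with
`v = (√(1−λ) sinΘ cosΦ, −√(1−λ) sinΘ sinΦ, cosΘ)` of sharpness `√(1 − λ sin²Θ)`. -/
theorem stmt10 (l : ℝ) (hl : 0 ≤ l ∧ l ≤ 1) (Θ Φ : ℝ) :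
    (∀ s : ℝ, s = 1 ∨ s = -1 →
      (!![1, 0; 0, (Real.sqrt (1 - l) : ℂ)])ᴴ * projQ Θ Φ s * !![1, 0; 0, (Real.sqrt (1 - l) : ℂ)]
        + (!![0, 0; 0, (Real.sqrt l : ℂ)])ᴴ * projQ Θ Φ s * !![0, 0; 0, (Real.sqrt l : ℂ)]
        = (1/2 : ℂ) • (1 + (s : ℂ) •
            dotσ ![Real.sqrt (1 - l) * Real.sin Θ * Real.cos Φ,
                   -(Real.sqrt (1 - l) * Real.sin Θ * Real.sin Φ), Real.cos Θ])) ∧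
    enorm3 ![Real.sqrt (1 - l) * Real.sin Θ * Real.cos Φ,
             -(Real.sqrt (1 - l) * Real.sin Θ * Real.sin Φ), Real.cos Θ]
      = Real.sqrt (1 - l * Real.sin Θ ^ 2) := by
  obtain ⟨hl0, hl1⟩ := hl
  have hsq : Real.sqrt (1 - l) ^ 2 = 1 - l := Real.sq_sqrt (by linarith)
  refine ⟨fun s _ => ?_, ?_⟩
  · rw [diagonal_kraus_sum_eq_scaleOffDiag _ (by rw [hsq, Real.sq_sqrt hl0]; ring),
      scaleOffDiag_projQ]
  · rw [enorm3_scaled_bloch, hsq, sub_sub_cancel]
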